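/- arXiv:2508.05603 — 2 statements merged into one kernel-verified Lean document; each statement's English description precedes it below -/
import Mathlib

section
/- Let a₁, a₂, λ > 0 and b : Z_N → ℝ with a₁ + b_i > 0 and a₂ + b_i > 0 for all i. Consider the function f(x₁, x₂) = exp(−∑_{i∈Z_N} ((a₁+b_i)x₁(i) + (a₂+b_i)x₂(i)) − λ∑_{i∈Z_N}(e^{−x₁(i)} + e^{−x₂(i)})) on ℝ^{Z_N} × ℝ^{Z_N}. Then f(x₁, x₂) = f(T(x₁,x₂), D(x₁,x₂)), where T, D are the positive-temperature periodic Pitman maps applied as (x₁,x₂) ↦ (T(x₁,x₂), D(x₁,x₂)). -/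
open Finset Real

variable {N : ℕ}

section Aux

variable {N : ℕ}

private lemma zval_neg_one [NeZero N] : (-1 : ZMod N).val = N - 1 := by
  obtain ⟨n, rfl⟩ := Nat.exists_eq_succ_of_ne_zero (NeZero.ne N)
  simpa using ZMod.val_neg_one n

private lemma zval_add_one [NeZero N] (a : ZMod N) (h : a ≠ -1) :
    (a + 1).val = a.val + 1 := by
  have h1 : a.val < N := ZMod.val_lt a
  have h2 : a.val ≠ N - 1 := by
    intro hv
    apply h
    have ha : a = ((N - 1 : ℕ) : ZMod N) := by rw [← hv, ZMod.natCast_val, ZMod.cast_id]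
    rw [ha]
    obtain ⟨n, rfl⟩ := Nat.exists_eq_succ_of_ne_zero (NeZero.ne N)
    have h0 : ((n + 1 : ℕ) : ZMod (n + 1)) = 0 := ZMod.natCast_self _
    push_cast at h0 ⊢
    linear_combination h0
  have h3 : a.val + 1 < N := by omega
  have key : a + 1 = ((a.val + 1 : ℕ) : ZMod N) := by
    rw [Nat.cast_add, Nat.cast_one, ZMod.natCast_val, ZMod.cast_id]
  rw [key, ZMod.val_cast_of_lt h3]

private lemma sum_zmod_range [NeZero N] (f : ZMod N → ℝ) :
    ∑ ℓ ∈ Finset.range N, f (ℓ : ZMod N) = ∑ j : ZMod N, f j := by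
  refine Finset.sum_nbij' (fun ℓ => (ℓ : ZMod N)) (fun j => j.val) ?_ ?_ ?_ ?_ ?_
  · intro a _; exact Finset.mem_univ _
  · intro a _; exact Finset.mem_range.mpr (ZMod.val_lt a)
  · intro a ha; exact ZMod.val_cast_of_lt (Finset.mem_range.mp ha)
  · intro a _; exact ZMod.natCast_rightInverse a
  · intro a _; rfl

private lemma sum_shift [NeZero N] (g : ZMod N → ℝ) (c : ZMod N) :
    ∑ i : ZMod N, g (i + c) = ∑ i : ZMod N, g i :=
  Fintype.sum_equiv (Equiv.addRight c) _ _ (fun _ => rfl)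

private lemma sum_shift_sub [NeZero N] (g : ZMod N → ℝ) :
    ∑ i : ZMod N, g (i - 1) = ∑ i : ZMod N, g i := by
  simpa [sub_eq_add_neg] using sum_shift g (-1)

private lemma sum_shift_add [NeZero N] (g : ZMod N → ℝ) :
    ∑ i : ZMod N, g (i + 1) = ∑ i : ZMod N, g i :=
  sum_shift g 1

end Aux

/-- Cyclic sum `Y_{[i,j]}` (closed-closed), going from `i` around to `j`. -/
noncomputable def cycCC [NeZero N] (Y : ZMod N → ℝ) (i j : ZMod N) : ℝ :=
  ∑ ℓ ∈ Finset.range ((j - i).val + 1), Y (i + ℓ)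

/-- Cyclic sum `Y_{(i,j]}` (open-closed), with `Y_{(i,i]} = 0`. -/
noncomputable def cycOC [NeZero N] (Y : ZMod N → ℝ) (i j : ZMod N) : ℝ :=
  ∑ ℓ ∈ Finset.range ((j - i).val), Y (i + 1 + ℓ)

/-- `Y_ℓ = X₂(ℓ+1) − X₁(ℓ)`. -/
noncomputable def Yv [NeZero N] (X₁ X₂ : ZMod N → ℝ) : ZMod N → ℝ :=
  fun ℓ => X₂ (ℓ + 1) - X₁ ℓ

/-- Positive-temperature periodic Pitman map `T`. -/
noncomputable def Tmap [NeZero N] (X₁ X₂ : ZMod N → ℝ) (i : ZMod N) : ℝ :=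
  X₁ (i - 1) + Real.log ((∑ j : ZMod N, Real.exp (cycCC (Yv X₁ X₂) (i - 1) j)) /
    (∑ j : ZMod N, Real.exp (cycCC (Yv X₁ X₂) i j)))

/-- Positive-temperature periodic Pitman map `D`. -/
noncomputable def Dmap [NeZero N] (X₁ X₂ : ZMod N → ℝ) (i : ZMod N) : ℝ :=
  X₂ (i + 1) + Real.log ((∑ j : ZMod N, Real.exp (cycOC (Yv X₁ X₂) i j)) /
    (∑ j : ZMod N, Real.exp (cycOC (Yv X₁ X₂) (i - 1) j)))

/-- Zero-temperature periodic Pitman map `T̃`. -/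
noncomputable def Tz [NeZero N] (X₁ X₂ : ZMod N → ℝ) (i : ZMod N) : ℝ :=
  X₁ (i - 1) + Finset.univ.sup' Finset.univ_nonempty (fun j => cycCC (Yv X₁ X₂) (i - 1) j)
    - Finset.univ.sup' Finset.univ_nonempty (fun j => cycCC (Yv X₁ X₂) i j)

/-- Zero-temperature periodic Pitman map `D̃`. -/
noncomputable def Dz [NeZero N] (X₁ X₂ : ZMod N → ℝ) (i : ZMod N) : ℝ :=
  X₂ (i + 1) + Finset.univ.sup' Finset.univ_nonempty (fun j => cycOC (Yv X₁ X₂) i j)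
    - Finset.univ.sup' Finset.univ_nonempty (fun j => cycOC (Yv X₁ X₂) (i - 1) j)


section Aux2

variable {N : ℕ}

private lemma cycCC_eq [NeZero N] (Y : ZMod N → ℝ) (i j : ZMod N) :
    cycCC Y i j = Y i + cycOC Y i j := by
  unfold cycCC cycOC
  rw [Finset.sum_range_succ']
  rw [add_comm]
  congr 1
  · simp
  · refine Finset.sum_congr rfl fun ℓ _ => ?_
    congr 1
    push_cast
    ring

private lemma cycCC_full [NeZero N] (Y : ZMod N → ℝ) (i : ZMod N) :
    cycCC Y i (i - 1) = ∑ j : ZMod N, Y j := by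
  unfold cycCC
  have h1 : (i - 1 - i : ZMod N) = -1 := by ring
  rw [h1, zval_neg_one]
  have h2 : N - 1 + 1 = N := Nat.succ_pred_eq_of_pos (Nat.pos_of_ne_zero (NeZero.ne N))
  rw [h2, sum_zmod_range (fun j => Y (i + j))]
  exact Fintype.sum_equiv (Equiv.addLeft i) _ _ (fun _ => rfl)

private lemma cycOC_sub_one [NeZero N] (Y : ZMod N → ℝ) (i j : ZMod N) (h : j ≠ i - 1) :
    cycOC Y (i - 1) j = cycCC Y i j := by
  unfold cycCC cycOC
  have ha : (j - i : ZMod N) ≠ -1 := fun hc => h (by linear_combination hc)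
  have h1 : (j - (i - 1) : ZMod N) = (j - i) + 1 := by ring
  rw [h1, zval_add_one _ ha]
  refine Finset.sum_congr rfl fun ℓ _ => ?_
  congr 1
  ring

/-- The partition-function identity `S i = P (i-1) + (exp (∑ Y) - 1)`. -/
private lemma S_eq_P_add [NeZero N] (Y : ZMod N → ℝ) (i : ZMod N) :
    ∑ j : ZMod N, Real.exp (cycCC Y i j) =
      (∑ j : ZMod N, Real.exp (cycOC Y (i - 1) j)) + (Real.exp (∑ j : ZMod N, Y j) - 1) := by
  have hm : (i - 1 : ZMod N) ∈ (Finset.univ : Finset (ZMod N)) := Finset.mem_univ _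
  rw [← Finset.add_sum_erase _ _ hm, ← Finset.add_sum_erase _ (fun j => Real.exp (cycOC Y (i-1) j)) hm]
  have h1 : cycCC Y i (i - 1) = ∑ j : ZMod N, Y j := cycCC_full Y i
  have h2 : cycOC Y (i - 1) (i - 1) = 0 := by
    unfold cycOC; simp
  rw [h1, h2]
  have h3 : ∑ j ∈ Finset.univ.erase (i - 1), Real.exp (cycCC Y i j)
      = ∑ j ∈ Finset.univ.erase (i - 1), Real.exp (cycOC Y (i - 1) j) := by
    refine Finset.sum_congr rfl fun j hj => ?_
    rw [cycOC_sub_one Y i j (Finset.ne_of_mem_erase hj)]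
  rw [h3, Real.exp_zero]
  ring

end Aux2


section Main

variable {N : ℕ}

private noncomputable def Sfun [NeZero N] (Y : ZMod N → ℝ) (i : ZMod N) : ℝ :=
  ∑ j : ZMod N, Real.exp (cycCC Y i j)

private noncomputable def Pfun [NeZero N] (Y : ZMod N → ℝ) (i : ZMod N) : ℝ :=
  ∑ j : ZMod N, Real.exp (cycOC Y i j)

private lemma Sfun_pos [NeZero N] (Y : ZMod N → ℝ) (i : ZMod N) : 0 < Sfun Y i :=
  Finset.sum_pos (fun _ _ => Real.exp_pos _) Finset.univ_nonempty

private lemma Pfun_pos [NeZero N] (Y : ZMod N → ℝ) (i : ZMod N) : 0 < Pfun Y i :=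
  Finset.sum_pos (fun _ _ => Real.exp_pos _) Finset.univ_nonempty

private lemma Sfun_eq_exp_mul [NeZero N] (Y : ZMod N → ℝ) (i : ZMod N) :
    Sfun Y i = Real.exp (Y i) * Pfun Y i := by
  unfold Sfun Pfun
  rw [Finset.mul_sum]
  refine Finset.sum_congr rfl fun j _ => ?_
  rw [cycCC_eq, Real.exp_add]

private lemma Sfun_eq_Pfun_add [NeZero N] (Y : ZMod N → ℝ) (i : ZMod N) :
    Sfun Y i = Pfun Y (i - 1) + (Real.exp (∑ j : ZMod N, Y j) - 1) :=
  S_eq_P_add Y i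

private lemma log_Sfun [NeZero N] (Y : ZMod N → ℝ) (i : ZMod N) :
    Real.log (Sfun Y i) = Y i + Real.log (Pfun Y i) := by
  rw [Sfun_eq_exp_mul, Real.log_mul (Real.exp_ne_zero _) (Pfun_pos Y i).ne', Real.log_exp]

private lemma Tmap_eq [NeZero N] (x₁ x₂ : ZMod N → ℝ) (i : ZMod N) :
    Tmap x₁ x₂ i = x₁ (i - 1) + Real.log (Sfun (Yv x₁ x₂) (i - 1))
      - Real.log (Sfun (Yv x₁ x₂) i) := by
  have h0 : Tmap x₁ x₂ i
      = x₁ (i - 1) + Real.log (Sfun (Yv x₁ x₂) (i - 1) / Sfun (Yv x₁ x₂) i) := rfl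
  rw [h0, Real.log_div (Sfun_pos (Yv x₁ x₂) (i-1)).ne' (Sfun_pos (Yv x₁ x₂) i).ne']
  ring

private lemma Dmap_eq [NeZero N] (x₁ x₂ : ZMod N → ℝ) (i : ZMod N) :
    Dmap x₁ x₂ i = x₂ (i + 1) + Real.log (Pfun (Yv x₁ x₂) i)
      - Real.log (Pfun (Yv x₁ x₂) (i - 1)) := by
  have h0 : Dmap x₁ x₂ i
      = x₂ (i + 1) + Real.log (Pfun (Yv x₁ x₂) i / Pfun (Yv x₁ x₂) (i - 1)) := rfl
  rw [h0, Real.log_div (Pfun_pos (Yv x₁ x₂) i).ne' (Pfun_pos (Yv x₁ x₂) (i-1)).ne']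
  ring

private lemma TD_add [NeZero N] (x₁ x₂ : ZMod N → ℝ) (i : ZMod N) :
    Tmap x₁ x₂ i + Dmap x₁ x₂ i = x₁ i + x₂ i := by
  rw [Tmap_eq, Dmap_eq, log_Sfun, log_Sfun]
  have hY1 : Yv x₁ x₂ (i - 1) = x₂ i - x₁ (i - 1) := by
    rw [Yv]; congr 1; ring
  have hY2 : Yv x₁ x₂ i = x₂ (i + 1) - x₁ i := rfl
  rw [hY1, hY2]
  ring

private lemma sum_Tmap [NeZero N] (x₁ x₂ : ZMod N → ℝ) :
    ∑ i : ZMod N, Tmap x₁ x₂ i = ∑ i : ZMod N, x₁ i := by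
  have h : ∑ i : ZMod N, Tmap x₁ x₂ i
      = ∑ i : ZMod N, (x₁ (i - 1) + Real.log (Sfun (Yv x₁ x₂) (i - 1))
          - Real.log (Sfun (Yv x₁ x₂) i)) :=
    Finset.sum_congr rfl fun i _ => Tmap_eq x₁ x₂ i
  rw [h, Finset.sum_sub_distrib, Finset.sum_add_distrib, sum_shift_sub x₁,
    sum_shift_sub (fun i => Real.log (Sfun (Yv x₁ x₂) i))]
  ring

private lemma sum_Dmap [NeZero N] (x₁ x₂ : ZMod N → ℝ) :
    ∑ i : ZMod N, Dmap x₁ x₂ i = ∑ i : ZMod N, x₂ i := by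
  have h : ∑ i : ZMod N, Dmap x₁ x₂ i
      = ∑ i : ZMod N, (x₂ (i + 1) + Real.log (Pfun (Yv x₁ x₂) i)
          - Real.log (Pfun (Yv x₁ x₂) (i - 1))) :=
    Finset.sum_congr rfl fun i _ => Dmap_eq x₁ x₂ i
  rw [h, Finset.sum_sub_distrib, Finset.sum_add_distrib, sum_shift_add x₂,
    sum_shift_sub (fun i => Real.log (Pfun (Yv x₁ x₂) i))]
  ring

private lemma alg_key (u v s s2 p0 p1 : ℝ) (hs : 0 < s) (hp : 0 < p1)
    (hr : v * s = u * p1) (hss : s2 = s - p0 + p1) :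
    v * (p0 / p1) + u * (s2 / s) = u + v := by
  field_simp
  linear_combination (p0 - p1) * hr + u * p1 * hss

private lemma exp_neg_TD [NeZero N] (x₁ x₂ : ZMod N → ℝ) (i : ZMod N) :
    Real.exp (-(Dmap x₁ x₂ i)) + Real.exp (-(Tmap x₁ x₂ (i + 1)))
      = Real.exp (-(x₁ i)) + Real.exp (-(x₂ (i + 1))) := by
  set Y := Yv x₁ x₂ with hY
  set s := Sfun Y i with hs
  set s2 := Sfun Y (i + 1) with hs2
  set p0 := Pfun Y (i - 1) with hp0
  set p1 := Pfun Y i with hp1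
  have hspos := Sfun_pos Y i
  have hp1pos := Pfun_pos Y i
  have e1 : Real.exp (-(Tmap x₁ x₂ (i + 1))) = Real.exp (-(x₁ i)) * (s2 / s) := by
    rw [Tmap_eq]
    have h11 : (i + 1 - 1 : ZMod N) = i := by ring
    rw [h11, ← hY, ← hs, ← hs2]
    rw [show -(x₁ i + Real.log s - Real.log s2) = -(x₁ i) + (Real.log s2 - Real.log s) by ring]
    rw [Real.exp_add, Real.exp_sub, Real.exp_log (Sfun_pos Y (i+1)), Real.exp_log hspos]
  have e2 : Real.exp (-(Dmap x₁ x₂ i)) = Real.exp (-(x₂ (i + 1))) * (p0 / p1) := by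
    rw [Dmap_eq, ← hY, ← hp0, ← hp1]
    rw [show -(x₂ (i+1) + Real.log p1 - Real.log p0) = -(x₂ (i+1)) + (Real.log p0 - Real.log p1)
      by ring]
    rw [Real.exp_add, Real.exp_sub, Real.exp_log (Pfun_pos Y (i-1)), Real.exp_log hp1pos]
  have hr : Real.exp (-(x₂ (i + 1))) * s = Real.exp (-(x₁ i)) * p1 := by
    rw [hs, Sfun_eq_exp_mul, ← hp1, ← mul_assoc, ← Real.exp_add]
    have : Y i = x₂ (i + 1) - x₁ i := rfl
    rw [this]
    congr 2
    ring
  have hss : s2 = s - p0 + p1 := by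
    have h1 : s = p0 + (Real.exp (∑ j : ZMod N, Y j) - 1) := by
      rw [hs, Sfun_eq_Pfun_add, ← hp0]
    have h2 : s2 = p1 + (Real.exp (∑ j : ZMod N, Y j) - 1) := by
      have h11 : (i + 1 - 1 : ZMod N) = i := by ring
      rw [hs2, Sfun_eq_Pfun_add, h11, ← hp1]
    linarith
  rw [e1, e2]
  exact alg_key _ _ _ _ _ _ hspos hp1pos hr hss

end Main

/-- Invariance of the inhomogeneous log-inverse-gamma joint density under the
positive-temperature periodic Pitman transform `(x₁,x₂) ↦ (T(x₁,x₂), D(x₁,x₂))`. -/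
theorem log_inv_gamma_density_invariance [NeZero N] (a₁ a₂ lam : ℝ) (b : ZMod N → ℝ)
    (ha₁ : 0 < a₁) (ha₂ : 0 < a₂) (hlam : 0 < lam)
    (hb1 : ∀ i, 0 < a₁ + b i) (hb2 : ∀ i, 0 < a₂ + b i)
    (x₁ x₂ : ZMod N → ℝ) :
    Real.exp (-(∑ i : ZMod N, ((a₁ + b i) * x₁ i + (a₂ + b i) * x₂ i)) -
        lam * ∑ i : ZMod N, (Real.exp (-x₁ i) + Real.exp (-x₂ i))) =
    Real.exp (-(∑ i : ZMod N, ((a₁ + b i) * Tmap x₁ x₂ i + (a₂ + b i) * Dmap x₁ x₂ i)) -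
        lam * ∑ i : ZMod N, (Real.exp (-(Tmap x₁ x₂ i)) + Real.exp (-(Dmap x₁ x₂ i)))) := by
  have hA : ∑ i : ZMod N, ((a₁ + b i) * Tmap x₁ x₂ i + (a₂ + b i) * Dmap x₁ x₂ i)
      = ∑ i : ZMod N, ((a₁ + b i) * x₁ i + (a₂ + b i) * x₂ i) := by
    have h1 : ∑ i : ZMod N, ((a₁ + b i) * Tmap x₁ x₂ i + (a₂ + b i) * Dmap x₁ x₂ i)
        = ∑ i : ZMod N, (a₁ * Tmap x₁ x₂ i + a₂ * Dmap x₁ x₂ i + b i * (x₁ i + x₂ i)) :=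
      Finset.sum_congr rfl fun i _ => by rw [← TD_add x₁ x₂ i]; ring
    have h2 : ∑ i : ZMod N, ((a₁ + b i) * x₁ i + (a₂ + b i) * x₂ i)
        = ∑ i : ZMod N, (a₁ * x₁ i + a₂ * x₂ i + b i * (x₁ i + x₂ i)) :=
      Finset.sum_congr rfl fun i _ => by ring
    rw [h1, h2, Finset.sum_add_distrib, Finset.sum_add_distrib, Finset.sum_add_distrib,
      Finset.sum_add_distrib, ← Finset.mul_sum, ← Finset.mul_sum, ← Finset.mul_sum,
      ← Finset.mul_sum, sum_Tmap, sum_Dmap]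
  have hB : ∑ i : ZMod N, (Real.exp (-(Tmap x₁ x₂ i)) + Real.exp (-(Dmap x₁ x₂ i)))
      = ∑ i : ZMod N, (Real.exp (-x₁ i) + Real.exp (-x₂ i)) := by
    calc ∑ i : ZMod N, (Real.exp (-(Tmap x₁ x₂ i)) + Real.exp (-(Dmap x₁ x₂ i)))
        = (∑ i : ZMod N, Real.exp (-(Tmap x₁ x₂ i)))
            + ∑ i : ZMod N, Real.exp (-(Dmap x₁ x₂ i)) := Finset.sum_add_distrib
      _ = (∑ i : ZMod N, Real.exp (-(Tmap x₁ x₂ (i + 1))))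
            + ∑ i : ZMod N, Real.exp (-(Dmap x₁ x₂ i)) := by
          rw [sum_shift_add (fun i => Real.exp (-(Tmap x₁ x₂ i)))]
      _ = ∑ i : ZMod N, (Real.exp (-(Dmap x₁ x₂ i)) + Real.exp (-(Tmap x₁ x₂ (i + 1)))) := by
          rw [Finset.sum_add_distrib]; ring
      _ = ∑ i : ZMod N, (Real.exp (-(x₁ i)) + Real.exp (-(x₂ (i + 1)))) :=
          Finset.sum_congr rfl fun i _ => exp_neg_TD x₁ x₂ i
      _ = (∑ i : ZMod N, Real.exp (-(x₁ i))) + ∑ i : ZMod N, Real.exp (-(x₂ (i + 1))) :=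
          Finset.sum_add_distrib
      _ = (∑ i : ZMod N, Real.exp (-(x₁ i))) + ∑ i : ZMod N, Real.exp (-(x₂ i)) := by
          rw [sum_shift_add (fun i => Real.exp (-(x₂ i)))]
      _ = ∑ i : ZMod N, (Real.exp (-x₁ i) + Real.exp (-x₂ i)) := Finset.sum_add_distrib.symm
  rw [hA, hB]
end

section
/- Let the map P : ℝ^{Z_N} × ℝ^{Z_N} → ℝ^{Z_N} × ℝ^{Z_N} be defined by P(W₁, W₂) = (T(W₂,W₁), D(W₂,W₁)), where T and D are the positive-temperature periodic Pitman maps. Then P is an involution: P(P(W₁,W₂)) = (W₁,W₂). -/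
open Finset Real

variable {N : ℕ}

/-!
Write `B i = ∑ⱼ exp Y_{(i,j]}` and `A i = exp (Y i) · B i` for `Y = Yv W₂ W₁`; then
`exp T(i) = exp W₂(i-1) · A (i-1) / A i` and `exp D(i) = exp W₁(i+1) · B i / B (i-1)`.
Hence the increments `Z` of the image pair satisfy `exp Z_ℓ · A (ℓ+1) = B (ℓ-1)`, so
`exp Z_{(i,j]}` telescopes to `B i B (i+1) / (B j B (j+1)) · exp (-Y_{(i+1,j+1]})` and
`B_Z m = B m · B (m+1) · S (m+1)` with `S m = ∑ⱼ exp (-Y_{(m,j]}) / (B (j-1) B j)`.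
Applying the map a second time returns `(W₁, W₂)` as soon as
`B_Z i · A i = B_Z (i-1) · A (i+1)`, that is,
`B i · exp (Y i) · S (i+1) = B (i-1) · exp (Y (i+1)) · S i`.
This follows from the recurrence `B (i-1) = exp (Y i) · B i + 1 - exp (∑ Y)`, the analogous
step relation for `S`, and the telescoping evaluation
`(1 - exp (∑ Y)) · S m = (1 - exp (∑ Y)) · exp (Y m - ∑ Y) / B (m-1)`.
The step relation is what covers `∑ Y = 0`, where the telescoping carries no information.
-/

theorem Finset.sum_sub_sum_eq_of_eq_off {ι M : Type*} [Fintype ι] [DecidableEq ι]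
    [AddCommGroup M] {f g : ι → M} (m : ι) (h : ∀ j ≠ m, f j = g j) :
    ∑ j, f j - ∑ j, g j = f m - g m := by
  rw [← add_sum_erase _ f (mem_univ m), ← add_sum_erase _ g (mem_univ m),
    sum_congr rfl fun j hj => h j (ne_of_mem_erase hj)]
  abel

namespace ZMod

variable [NeZero N]

theorem val_add_one_of_ne_zero {x : ZMod N} (h : x + 1 ≠ 0) : (x + 1).val = x.val + 1 := by
  have hcast : x + 1 = ((x.val + 1 : ℕ) : ZMod N) := by
    rw [Nat.cast_succ, natCast_zmod_val]
  have hlt : x.val + 1 < N := by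
    refine lt_of_le_of_ne (val_lt x) fun hN => h ?_
    rw [hcast, hN, natCast_self]
  rw [hcast, val_cast_of_lt hlt]

theorem sum_comp_add_one {M : Type*} [AddCommMonoid M] (f : ZMod N → M) :
    ∑ j, f (j + 1) = ∑ j, f j :=
  Equiv.sum_comp (Equiv.addRight (1 : ZMod N)) f

theorem sum_comp_sub_one {M : Type*} [AddCommMonoid M] (f : ZMod N → M) :
    ∑ j, f (j - 1) = ∑ j, f j :=
  Equiv.sum_comp (Equiv.subRight (1 : ZMod N)) f

theorem eq_of_forall_add_one_eq {α : Type*} {f : ZMod N → α} (i : ZMod N)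
    (h : ∀ j, j + 1 ≠ i → f (j + 1) = f j) (j : ZMod N) : f j = f i := by
  suffices hn : ∀ n < N, f (i + n) = f i by
    simpa using hn (j - i).val (val_lt _)
  intro n
  induction n with
  | zero => simp
  | succ n ih =>
    intro hn
    rw [Nat.cast_succ, ← add_assoc, h _ fun heq => ?_, ih (by omega)]
    have h0 : (n : ZMod N) + 1 = 0 := by rwa [add_assoc, add_eq_left] at heq
    have := val_cast_of_lt hn
    simp [h0] at this

end ZMod

section CyclicSums

variable [NeZero N] (Y : ZMod N → ℝ)

@[simp]
theorem cycOC_self (i : ZMod N) : cycOC Y i i = 0 := by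
  simp [cycOC]

theorem cycOC_add_one {i j : ZMod N} (h : j + 1 ≠ i) :
    cycOC Y i (j + 1) = cycOC Y i j + Y (j + 1) := by
  have hshift : j + 1 - i = j - i + 1 := by ring
  rw [cycOC, hshift, ZMod.val_add_one_of_ne_zero (by rwa [← hshift, sub_ne_zero]),
    sum_range_succ, ZMod.natCast_zmod_val, ← cycOC]
  congr 2
  ring

theorem cycOC_eq_add_cycOC_add_one {i j : ZMod N} (h : j ≠ i) :
    cycOC Y i j = Y (i + 1) + cycOC Y (i + 1) j := by
  have hshift : j - i = j - (i + 1) + 1 := by ring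
  rw [cycOC, hshift, ZMod.val_add_one_of_ne_zero (by rwa [← hshift, sub_ne_zero]),
    sum_range_succ', cycOC]
  simp only [Nat.cast_add, Nat.cast_one, Nat.cast_zero, add_zero]
  rw [add_comm]
  congr 1
  exact sum_congr rfl fun ℓ _ => by ring_nf

theorem cycOC_sub_one_self (i : ZMod N) : cycOC Y i (i - 1) = ∑ j, Y j - Y i := by
  have h := Finset.sum_sub_sum_eq_of_eq_off (f := fun j => cycOC Y i (j + 1))
    (g := fun j => cycOC Y i j + Y (j + 1)) (i - 1)
    fun j hj => cycOC_add_one Y fun h => hj (eq_sub_of_add_eq h)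
  simp only [sub_add_cancel, cycOC_self, sum_add_distrib, ZMod.sum_comp_add_one] at h
  linarith

theorem cycCC_eq_add_cycOC (i j : ZMod N) : cycCC Y i j = Y i + cycOC Y i j := by
  rw [cycCC, sum_range_succ', cycOC]
  simp only [Nat.cast_add, Nat.cast_one, Nat.cast_zero, add_zero]
  rw [add_comm]
  congr 1
  exact sum_congr rfl fun ℓ _ => by ring_nf

end CyclicSums

section PartitionFunctions

variable [NeZero N] (Y : ZMod N → ℝ)

noncomputable def sumExpOC (i : ZMod N) : ℝ :=
  ∑ j, exp (cycOC Y i j)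

theorem sumExpOC_pos (i : ZMod N) : 0 < sumExpOC Y i :=
  sum_pos (fun _ _ => exp_pos _) univ_nonempty

theorem sum_exp_cycCC (i : ZMod N) :
    ∑ j, exp (cycCC Y i j) = exp (Y i) * sumExpOC Y i := by
  simp only [sumExpOC, mul_sum, cycCC_eq_add_cycOC, exp_add]

theorem sumExpOC_sub_one (i : ZMod N) :
    sumExpOC Y (i - 1) = exp (Y i) * sumExpOC Y i + 1 - exp (∑ j, Y j) := by
  have h := Finset.sum_sub_sum_eq_of_eq_off (f := fun j => exp (cycOC Y (i - 1) j))
    (g := fun j => exp (Y i) * exp (cycOC Y i j)) (i - 1) fun j hj => by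
      rw [cycOC_eq_add_cycOC_add_one Y hj, sub_add_cancel, exp_add]
  rw [← mul_sum, cycOC_self, cycOC_sub_one_self, ← exp_add, add_sub_cancel, exp_zero] at h
  unfold sumExpOC
  linarith

noncomputable def sumExpNegOC (m : ZMod N) : ℝ :=
  ∑ j, exp (-cycOC Y m j) / (sumExpOC Y (j - 1) * sumExpOC Y j)

theorem one_sub_exp_sum_mul_sumExpNegOC (m : ZMod N) :
    (1 - exp (∑ j, Y j)) * sumExpNegOC Y m =
      (1 - exp (∑ j, Y j)) * (exp (Y m) / (exp (∑ j, Y j) * sumExpOC Y (m - 1))) := by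
  have hB := sumExpOC_pos Y
  have h := Finset.sum_sub_sum_eq_of_eq_off
    (f := fun j =>
      (1 - exp (∑ k, Y k)) * (exp (-cycOC Y m j) / (sumExpOC Y (j - 1) * sumExpOC Y j)))
    (g := fun j => exp (-cycOC Y m j) / sumExpOC Y j -
      exp (-cycOC Y m (j - 1)) / sumExpOC Y (j - 1)) m
    fun j hj => by
      have hstep := cycOC_add_one Y (i := m) (j := j - 1) (by rwa [sub_add_cancel])
      rw [sub_add_cancel] at hstep
      have hP : 1 - exp (∑ k, Y k) = sumExpOC Y (j - 1) - exp (Y j) * sumExpOC Y j := by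
        rw [sumExpOC_sub_one]
        ring
      rw [hstep, neg_add, exp_add, exp_neg (Y j), hP]
      field_simp [(hB j).ne', (hB (j - 1)).ne', (exp_pos (Y j)).ne']
  rw [sum_sub_distrib, ZMod.sum_comp_sub_one (fun j => exp (-cycOC Y m j) / sumExpOC Y j),
    sub_self, sub_zero, ← mul_sum] at h
  rw [sumExpNegOC, h, cycOC_self, cycOC_sub_one_self, neg_zero, exp_zero, neg_sub, exp_sub]
  field_simp [(hB m).ne', (hB (m - 1)).ne', (exp_pos (∑ j, Y j)).ne']
  linear_combination -exp (∑ k, Y k) * sumExpOC_sub_one Y m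

theorem sumExpNegOC_add_one (m : ZMod N) :
    sumExpNegOC Y (m + 1) = exp (Y (m + 1)) * sumExpNegOC Y m +
      exp (Y (m + 1)) * (exp (-∑ j, Y j) - 1) / (sumExpOC Y (m - 1) * sumExpOC Y m) := by
  have h := Finset.sum_sub_sum_eq_of_eq_off
    (f := fun j => exp (-cycOC Y (m + 1) j) / (sumExpOC Y (j - 1) * sumExpOC Y j))
    (g := fun j => exp (Y (m + 1)) * (exp (-cycOC Y m j) / (sumExpOC Y (j - 1) * sumExpOC Y j)))
    m fun j hj => by
      rw [cycOC_eq_add_cycOC_add_one Y hj, neg_add, exp_add, exp_neg (Y (m + 1))]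
      field_simp [(exp_pos (Y (m + 1))).ne']
  have hfull : cycOC Y (m + 1) m = ∑ j, Y j - Y (m + 1) := by
    simpa using cycOC_sub_one_self Y (m + 1)
  rw [← mul_sum, cycOC_self, hfull, neg_sub, exp_sub, neg_zero, exp_zero] at h
  rw [← sub_eq_iff_eq_add', sumExpNegOC, sumExpNegOC, h, exp_neg]
  field_simp

theorem sumExpOC_mul_sumExpNegOC_add_one (i : ZMod N) :
    sumExpOC Y i * exp (Y i) * sumExpNegOC Y (i + 1) =
      sumExpOC Y (i - 1) * exp (Y (i + 1)) * sumExpNegOC Y i := by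
  have hB := sumExpOC_pos Y
  rw [sumExpNegOC_add_one, exp_neg]
  linear_combination (norm := skip)
    (-exp (Y (i + 1)) * sumExpNegOC Y i) * sumExpOC_sub_one Y i -
      exp (Y (i + 1)) * one_sub_exp_sum_mul_sumExpNegOC Y i
  field_simp [(hB i).ne', (hB (i - 1)).ne', (exp_pos (∑ j, Y j)).ne']
  ring

end PartitionFunctions

section DualIncrements

variable [NeZero N] {Y Z : ZMod N → ℝ}
  (hZ : ∀ ℓ, exp (Z ℓ) * (exp (Y (ℓ + 1)) * sumExpOC Y (ℓ + 1)) = sumExpOC Y (ℓ - 1))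
include hZ

theorem exp_cycOC_dual (i j : ZMod N) :
    exp (cycOC Z i j) * (sumExpOC Y j * sumExpOC Y (j + 1) * exp (cycOC Y (i + 1) (j + 1))) =
      sumExpOC Y i * sumExpOC Y (i + 1) := by
  refine (ZMod.eq_of_forall_add_one_eq
    (f := fun j => exp (cycOC Z i j) *
      (sumExpOC Y j * sumExpOC Y (j + 1) * exp (cycOC Y (i + 1) (j + 1)))) i ?_ j).trans
    (by simp)
  intro k hk
  have hZk := hZ (k + 1)
  rw [add_sub_cancel_right] at hZk
  rw [cycOC_add_one Z hk,
    cycOC_add_one Y (i := i + 1) (j := k + 1) fun h => hk (add_right_cancel h), exp_add, exp_add]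
  linear_combination (exp (cycOC Z i k) * sumExpOC Y (k + 1) * exp (cycOC Y (i + 1) (k + 1))) * hZk

theorem sumExpOC_dual (m : ZMod N) :
    sumExpOC Z m = sumExpOC Y m * sumExpOC Y (m + 1) * sumExpNegOC Y (m + 1) := by
  have hB := sumExpOC_pos Y
  have hterm : ∀ j, exp (cycOC Z m j) = sumExpOC Y m * sumExpOC Y (m + 1) *
      (exp (-cycOC Y (m + 1) (j + 1)) / (sumExpOC Y (j + 1 - 1) * sumExpOC Y (j + 1))) := by
    intro j
    rw [add_sub_cancel_right, exp_neg, ← exp_cycOC_dual hZ m j]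
    field_simp [(hB j).ne', (hB (j + 1)).ne']
  rw [sumExpOC, sum_congr rfl fun j _ => hterm j, ← mul_sum, sumExpNegOC,
    ZMod.sum_comp_add_one fun k => exp (-cycOC Y (m + 1) k) / (sumExpOC Y (k - 1) * sumExpOC Y k)]

theorem sumExpOC_dual_mul (i : ZMod N) :
    sumExpOC Z i * (exp (Y i) * sumExpOC Y i) =
      sumExpOC Z (i - 1) * (exp (Y (i + 1)) * sumExpOC Y (i + 1)) := by
  rw [sumExpOC_dual hZ, sumExpOC_dual hZ, sub_add_cancel]
  linear_combination (sumExpOC Y i * sumExpOC Y (i + 1)) * sumExpOC_mul_sumExpNegOC_add_one Y i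

end DualIncrements

section PitmanMaps

variable [NeZero N] (X₁ X₂ : ZMod N → ℝ)

theorem exp_Tmap (i : ZMod N) :
    exp (Tmap X₁ X₂ i) = exp (X₁ (i - 1)) *
      (exp (Yv X₁ X₂ (i - 1)) * sumExpOC (Yv X₁ X₂) (i - 1) /
        (exp (Yv X₁ X₂ i) * sumExpOC (Yv X₁ X₂) i)) := by
  have hA := fun i => mul_pos (exp_pos (Yv X₁ X₂ i)) (sumExpOC_pos (Yv X₁ X₂) i)
  rw [Tmap, sum_exp_cycCC, sum_exp_cycCC, exp_add, exp_log (div_pos (hA _) (hA _))]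

theorem exp_Dmap (i : ZMod N) :
    exp (Dmap X₁ X₂ i) = exp (X₂ (i + 1)) *
      (sumExpOC (Yv X₁ X₂) i / sumExpOC (Yv X₁ X₂) (i - 1)) := by
  rw [Dmap, exp_add]
  exact congrArg _ (exp_log (div_pos (sumExpOC_pos _ _) (sumExpOC_pos _ _)))

theorem exp_Yv_Dmap_Tmap (ℓ : ZMod N) :
    exp (Yv (Dmap X₁ X₂) (Tmap X₁ X₂) ℓ) *
        (exp (Yv X₁ X₂ (ℓ + 1)) * sumExpOC (Yv X₁ X₂) (ℓ + 1)) =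
      sumExpOC (Yv X₁ X₂) (ℓ - 1) := by
  have hB := sumExpOC_pos (Yv X₁ X₂)
  have hY : exp (X₁ ℓ) * exp (Yv X₁ X₂ ℓ) = exp (X₂ (ℓ + 1)) := by
    rw [← exp_add, Yv, add_sub_cancel]
  rw [Yv, exp_sub, exp_Tmap, exp_Dmap, add_sub_cancel_right]
  field_simp [(hB ℓ).ne', (hB (ℓ + 1)).ne']
  linear_combination sumExpOC (Yv X₁ X₂) (ℓ - 1) * hY

theorem Tmap_Dmap_Tmap : Tmap (Dmap X₁ X₂) (Tmap X₁ X₂) = X₂ := by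
  funext i
  set Y := Yv X₁ X₂
  set Z := Yv (Dmap X₁ X₂) (Tmap X₁ X₂)
  have hZ := exp_Yv_Dmap_Tmap X₁ X₂
  have hprev := hZ (i - 1)
  rw [sub_add_cancel] at hprev
  apply exp_injective
  rw [exp_Tmap, exp_Dmap, sub_add_cancel, mul_assoc, mul_eq_left₀ (exp_pos _).ne',
    div_mul_div_comm, div_eq_one_iff_eq (mul_ne_zero (sumExpOC_pos Y _).ne'
      (mul_ne_zero (exp_pos _).ne' (sumExpOC_pos Z _).ne'))]
  linear_combination -exp (Z (i - 1)) * sumExpOC Z (i - 1) * hZ i -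
    exp (Z i) * exp (Z (i - 1)) * sumExpOC_dual_mul hZ i + exp (Z i) * sumExpOC Z i * hprev

theorem Dmap_Dmap_Tmap : Dmap (Dmap X₁ X₂) (Tmap X₁ X₂) = X₁ := by
  funext i
  have hB := sumExpOC_pos (Yv X₁ X₂)
  apply exp_injective
  rw [exp_Dmap, exp_Tmap, add_sub_cancel_right]
  field_simp [(sumExpOC_pos (Yv (Dmap X₁ X₂) (Tmap X₁ X₂)) (i - 1)).ne', (hB i).ne',
    (hB (i + 1)).ne']
  linear_combination sumExpOC_dual_mul (exp_Yv_Dmap_Tmap X₁ X₂) i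

end PitmanMaps

/-- The map `P(W₁,W₂) = (T(W₂,W₁), D(W₂,W₁))` is an involution:
`P(P(W₁,W₂)) = (W₁,W₂)`. -/
theorem pitman_involution [NeZero N] (W₁ W₂ : ZMod N → ℝ) :
    Tmap (Dmap W₂ W₁) (Tmap W₂ W₁) = W₁ ∧
    Dmap (Dmap W₂ W₁) (Tmap W₂ W₁) = W₂ :=
  ⟨Tmap_Dmap_Tmap W₂ W₁, Dmap_Dmap_Tmap W₂ W₁⟩
end
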